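/- Lebesgue's space-filling curve theorem: the map F²_l: [0,1] → [0,1]², defined to equal F² on the Cantor set C and extended by linear interpolation on each removed interval — F²_l(x) = (1/(b−a))[F²(a)(b−x) + F²(b)(x−a)] for x in a removed interval (a,b) — is continuous on all of [0,1] and maps [0,1] onto the unit square [0,1]². In particular, there exists a continuous surjection from [0,1] onto [0,1]². -/

import Mathlib

/-!
The map `χ ↦ ∑ 2χᵢ 3^-(i+1)` is a homeomorphism from Cantor space `ℕ → Bool` onto `C`. In these
coordinates the Lebesgue map reads off the even and the odd digits of `χ`
as two binary expansions, so it is continuous on `C` and onto the unit square.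

Continuity of the interpolated curve at a point `x₀` of a compact set `C` needs only continuity
on `C`: a point of a gap near `x₀` is a convex combination of the values at a near endpoint, close
to `x₀`, and at a far endpoint, whose weight is small unless it is close to `x₀` as well.
-/

/-- The Cantor ternary set: reals admitting a ternary expansion with all digits in {0,2}
(digits indexed from 0, the k-th digit having weight 3^{-(k+1)}). -/
def cantorTernarySet : Set ℝ :=
  {x | ∃ ε : ℕ → ℝ, (∀ k, ε k = 0 ∨ ε k = 2) ∧ x = ∑' k : ℕ, ε k / 3 ^ (k + 1)}

/-- `G` agrees on the Cantor set with the Lebesgue digit-interleaving map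
`F² : C → [0,1]²`, splitting the ternary digit sequence into its odd- and
even-indexed subsequences read as binary digits. -/
def IsLebesgueMap2 (G : ℝ → ℝ × ℝ) : Prop :=
  ∀ ε : ℕ → ℝ, (∀ k, ε k = 0 ∨ ε k = 2) →
    G (∑' k : ℕ, ε k / 3 ^ (k + 1)) =
      (∑' k : ℕ, (ε (2 * k) / 2) / 2 ^ (k + 1),
       ∑' k : ℕ, (ε (2 * k + 1) / 2) / 2 ^ (k + 1))

open Real Set Topology

section Gaps

variable {E : Type*} [NormedAddCommGroup E] [NormedSpace ℝ E]

def InterpolatesLinearlyOnGaps (C : Set ℝ) (f : ℝ → E) : Prop :=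
  ∀ a ∈ C, ∀ b ∈ C, a < b → Ioo a b ∩ C = ∅ → ∀ x ∈ Ioo a b,
    f x = ((b - x) / (b - a)) • f a + ((x - a) / (b - a)) • f b

lemma norm_smul_add_smul_sub_le (p q z : E) {t : ℝ} (ht₀ : 0 ≤ t) (ht₁ : t ≤ 1) :
    ‖(1 - t) • p + t • q - z‖ ≤ ‖p - z‖ + t * ‖q - z‖ := by
  calc ‖(1 - t) • p + t • q - z‖ = ‖(1 - t) • (p - z) + t • (q - z)‖ := by congr 1; module
    _ ≤ (1 - t) * ‖p - z‖ + t * ‖q - z‖ := by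
      refine (norm_add_le _ _).trans_eq ?_
      rw [norm_smul, norm_smul, Real.norm_of_nonneg (by linarith), Real.norm_of_nonneg ht₀]
    _ ≤ ‖p - z‖ + t * ‖q - z‖ := by nlinarith [norm_nonneg (p - z)]

lemma IsClosed.exists_gap_of_notMem {C : Set ℝ} {u v x : ℝ} (hC : IsClosed C) (hu : u ∈ C)
    (hv : v ∈ C) (hx : x ∈ Icc u v) (hxC : x ∉ C) :
    ∃ a ∈ C, ∃ b ∈ C, x ∈ Ioo a b ∧ Ioo a b ∩ C = ∅ := by
  have ha := (hC.inter isClosed_Iic).csSup_mem ⟨u, hu, hx.1⟩ ⟨x, fun _ h ↦ h.2⟩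
  have hb := (hC.inter isClosed_Ici).csInf_mem ⟨v, hv, hx.2⟩ ⟨x, fun _ h ↦ h.2⟩
  refine ⟨_, ha.1, _, hb.1, ⟨ha.2.lt_of_ne (ne_of_mem_of_not_mem ha.1 hxC),
    hb.2.lt_of_ne' (ne_of_mem_of_not_mem hb.1 hxC)⟩, ?_⟩
  refine eq_empty_of_forall_notMem fun y ⟨⟨hay, hyb⟩, hyC⟩ ↦ ?_
  rcases le_total y x with hyx | hxy
  · exact hay.not_ge (le_csSup ⟨x, fun _ h ↦ h.2⟩ ⟨hyC, hyx⟩)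
  · exact hyb.not_ge (csInf_le ⟨x, fun _ h ↦ h.2⟩ ⟨hyC, hxy⟩)

variable {C : Set ℝ} {f : ℝ → E} {u v : ℝ}

lemma InterpolatesLinearlyOnGaps.exists_near_far_endpoints (hf : InterpolatesLinearlyOnGaps C f)
    (hC : IsClosed C) (hu : u ∈ C) (hv : v ∈ C) {x x₀ : ℝ} (hx : x ∈ Icc u v) (hxC : x ∉ C)
    (hx₀ : x₀ ∈ C) :
    ∃ e ∈ C, ∃ e' ∈ C, ∃ t ∈ Icc (0 : ℝ) 1, f x = (1 - t) • f e + t • f e' ∧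
      |e - x₀| ≤ |x - x₀| ∧ t * |e' - e| ≤ |x - x₀| := by
  obtain ⟨a, ha, b, hb, ⟨hax, hxb⟩, hgap⟩ := hC.exists_gap_of_notMem hu hv hx hxC
  have hab : 0 < b - a := by linarith
  have hfx := hf a ha b hb (by linarith) hgap x ⟨hax, hxb⟩
  have hx₀ab : x₀ ∉ Ioo a b := fun h ↦ (eq_empty_iff_forall_notMem.1 hgap) x₀ ⟨h, hx₀⟩
  rcases le_or_gt x₀ a with hx₀a | hax₀
  · refine ⟨a, ha, b, hb, (x - a) / (b - a),
      ⟨by positivity, (div_le_one hab).2 (by linarith)⟩, ?_, ?_, ?_⟩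
    · rw [hfx, one_sub_div hab.ne']
      congr 2
      ring
    · rw [abs_of_nonneg (by linarith), abs_of_nonneg (by linarith)]
      linarith
    · rw [abs_of_pos hab, div_mul_cancel₀ _ hab.ne', abs_of_nonneg (by linarith)]
      linarith
  · have hbx₀ : b ≤ x₀ := not_lt.1 fun h ↦ hx₀ab ⟨hax₀, h⟩
    refine ⟨b, hb, a, ha, (b - x) / (b - a),
      ⟨by positivity, (div_le_one hab).2 (by linarith)⟩, ?_, ?_, ?_⟩
    · rw [hfx, one_sub_div hab.ne', add_comm]
      congr 2
      ring
    · rw [abs_of_nonpos (by linarith), abs_of_nonpos (by linarith)]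
      linarith
    · rw [abs_sub_comm, abs_of_pos hab, div_mul_cancel₀ _ hab.ne', abs_of_nonpos (by linarith)]
      linarith

lemma InterpolatesLinearlyOnGaps.continuousWithinAt_of_mem (hf : InterpolatesLinearlyOnGaps C f)
    (hC : IsCompact C) (hu : u ∈ C) (hv : v ∈ C) (hfC : ContinuousOn f C) {x₀ : ℝ}
    (hx₀ : x₀ ∈ C) : ContinuousWithinAt f (Icc u v) x₀ := by
  obtain ⟨M, hM⟩ :=
    hC.exists_bound_of_continuousOn (f := fun y ↦ f y - f x₀) (hfC.sub continuousOn_const)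
  have hM₀ : 0 ≤ M := (norm_nonneg _).trans (hM x₀ hx₀)
  rw [Metric.continuousWithinAt_iff]
  intro ε hε
  obtain ⟨δ, hδ, hδf⟩ := Metric.continuousWithinAt_iff.1 (hfC x₀ hx₀) (ε / 2) (half_pos hε)
  simp only [dist_eq_norm, Real.norm_eq_abs] at hδf
  set η := min (δ / 2) (ε * δ / (4 * (M + 1)))
  have hηδ : η ≤ δ / 2 := min_le_left _ _
  have hηε : η * (4 * (M + 1)) ≤ ε * δ := (le_div_iff₀ (by positivity)).1 (min_le_right _ _)
  refine ⟨η, by positivity, fun {x} hx hxη ↦ ?_⟩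
  rw [Real.dist_eq] at hxη
  rw [dist_eq_norm]
  by_cases hxC : x ∈ C
  · exact (hδf hxC (by linarith)).trans (half_lt_self hε)
  obtain ⟨e, he, e', he', t, ⟨ht₀, ht₁⟩, hfx, hex, hte⟩ :=
    hf.exists_near_far_endpoints hC.isClosed hu hv hx hxC hx₀
  have hnear : ‖f e - f x₀‖ < ε / 2 := hδf he (by linarith)
  have hfar : t * ‖f e' - f x₀‖ < ε / 2 := by
    by_cases he'x₀ : |e' - x₀| < δ
    · calc t * ‖f e' - f x₀‖ ≤ 1 * ‖f e' - f x₀‖ := by gcongr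
        _ < ε / 2 := by rw [one_mul]; exact hδf he' he'x₀
    · have hee' : δ / 2 ≤ |e' - e| := by linarith [abs_sub_le e' e x₀]
      have htδ : t * (δ / 2) < η := by nlinarith [mul_le_mul_of_nonneg_left hee' ht₀]
      have htM : t * (M + 1) * δ < ε / 2 * δ := by nlinarith
      calc t * ‖f e' - f x₀‖ ≤ t * (M + 1) := by gcongr; linarith [hM e' he']
        _ < ε / 2 := lt_of_mul_lt_mul_right htM hδ.le
  rw [hfx]
  calc ‖(1 - t) • f e + t • f e' - f x₀‖ ≤ ‖f e - f x₀‖ + t * ‖f e' - f x₀‖ :=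
        norm_smul_add_smul_sub_le _ _ _ ht₀ ht₁
    _ < ε := by linarith

theorem InterpolatesLinearlyOnGaps.continuousOn_Icc (hf : InterpolatesLinearlyOnGaps C f)
    (hC : IsCompact C) (hu : u ∈ C) (hv : v ∈ C) (hfC : ContinuousOn f C) :
    ContinuousOn f (Icc u v) := by
  intro x hx
  by_cases hxC : x ∈ C
  · exact hf.continuousWithinAt_of_mem hC hu hv hfC hxC
  obtain ⟨a, ha, b, hb, hxab, hgap⟩ := hC.isClosed.exists_gap_of_notMem hu hv hx hxC
  have hinterp :
      ContinuousAt (fun y ↦ ((b - y) / (b - a)) • f a + ((y - a) / (b - a)) • f b) x := by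
    fun_prop
  refine (hinterp.congr ?_).continuousWithinAt
  filter_upwards [Ioo_mem_nhds hxab.1 hxab.2] with y hy
  exact (hf a ha b hb (hxab.1.trans hxab.2) hgap y hy).symm

end Gaps

section Lebesgue

noncomputable def cantorPoint (χ : ℕ → Bool) : ℝ :=
  ofDigits fun i ↦ cond (χ i) (2 : Fin 3) 0

lemma range_cantorPoint : range cantorPoint = cantorSet := by
  change range (Subtype.val ∘ cantorSetHomeomorphNatToBool.symm) = _
  rw [EquivLike.range_comp, Subtype.range_coe]

lemma isInducing_cantorPoint : IsInducing cantorPoint :=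
  IsInducing.subtypeVal.comp cantorSetHomeomorphNatToBool.symm.isInducing

lemma one_mem_cantorSet : (1 : ℝ) ∈ cantorSet := by
  rw [← range_cantorPoint]
  exact ⟨fun _ ↦ true, ofDigits_const_last_eq_one' (b := 3) (by norm_num)⟩

lemma tsum_ternary_eq_cantorPoint (χ : ℕ → Bool) :
    ∑' k, (cond (χ k) 2 0 : ℝ) / 3 ^ (k + 1) = cantorPoint χ := by
  refine tsum_congr fun k ↦ ?_
  cases h : χ k <;> simp [ofDigitsTerm, h, div_eq_mul_inv]

lemma tsum_binary_eq_fromBinary (ψ : ℕ → Bool) :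
    ∑' k, (cond (ψ k) 1 0 : ℝ) / 2 ^ (k + 1) = fromBinary ψ := by
  change _ = ofDigits fun i ↦ finTwoEquiv.symm (ψ i)
  refine tsum_congr fun k ↦ ?_
  cases h : ψ k <;> simp [ofDigitsTerm, h, div_eq_mul_inv, finTwoEquiv]

theorem cantorTernarySet_eq_cantorSet : cantorTernarySet = cantorSet := by
  unfold cantorTernarySet
  rw [← range_cantorPoint]
  ext x
  constructor
  · rintro ⟨ε, hε, rfl⟩
    refine ⟨fun k ↦ decide (ε k = 2), ?_⟩
    rw [← tsum_ternary_eq_cantorPoint]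
    refine tsum_congr fun k ↦ ?_
    rcases hε k with h | h <;> simp [h]
  · rintro ⟨χ, rfl⟩
    refine ⟨fun k ↦ cond (χ k) 2 0, fun k ↦ ?_, (tsum_ternary_eq_cantorPoint χ).symm⟩
    cases h : χ k <;> simp [h]

noncomputable def lebesgueCantor (χ : ℕ → Bool) : ℝ × ℝ :=
  (fromBinary fun k ↦ χ (2 * k), fromBinary fun k ↦ χ (2 * k + 1))

lemma continuous_lebesgueCantor : Continuous lebesgueCantor := by
  have := fromBinary_continuous
  unfold lebesgueCantor
  fun_prop

lemma unitSquare_subset_range_lebesgueCantor :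
    Icc (0 : ℝ) 1 ×ˢ Icc (0 : ℝ) 1 ⊆ range lebesgueCantor := by
  rintro ⟨p, q⟩ ⟨hp, hq⟩
  obtain ⟨u, hu⟩ := fromBinary_surjective ⟨p, hp⟩
  obtain ⟨v, hv⟩ := fromBinary_surjective ⟨q, hq⟩
  refine ⟨Sum.elim u v ∘ Equiv.natSumNatEquivNat.symm, ?_⟩
  simp [lebesgueCantor, hu, hv]

variable {G : ℝ → ℝ × ℝ}

lemma IsLebesgueMap2.apply_cantorPoint (hG : IsLebesgueMap2 G) (χ : ℕ → Bool) :
    G (cantorPoint χ) = lebesgueCantor χ := by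
  have h := hG (fun k ↦ cond (χ k) 2 0) fun k ↦ by cases χ k <;> simp
  rw [tsum_ternary_eq_cantorPoint] at h
  rw [h, lebesgueCantor, ← tsum_binary_eq_fromBinary, ← tsum_binary_eq_fromBinary]
  congr <;> funext k <;> cases χ _ <;> norm_num

theorem IsLebesgueMap2.continuousOn (hG : IsLebesgueMap2 G) : ContinuousOn G cantorSet := by
  rw [← range_cantorPoint, ← image_univ, isInducing_cantorPoint.continuousOn_image_iff,
    continuousOn_univ]
  exact continuous_lebesgueCantor.congr fun χ ↦ (hG.apply_cantorPoint χ).symm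

theorem IsLebesgueMap2.surjOn (hG : IsLebesgueMap2 G) :
    SurjOn G cantorSet (Icc (0 : ℝ) 1 ×ˢ Icc (0 : ℝ) 1) := by
  intro p hp
  obtain ⟨χ, rfl⟩ := unitSquare_subset_range_lebesgueCantor hp
  exact ⟨cantorPoint χ, range_cantorPoint ▸ mem_range_self χ, hG.apply_cantorPoint χ⟩

end Lebesgue

/-- Lebesgue's space-filling curve theorem: the extension `F²_l` of the Lebesgue map
`F²`, obtained by linear interpolation on each removed interval `(a,b)` (a connected
component of `[0,1] \ C` with endpoints in `C`), is continuous on `[0,1]` and maps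
`[0,1]` onto the unit square; in particular there is a continuous surjection from
`[0,1]` onto `[0,1]²`. -/
theorem lebesgue_space_filling_curve
    (G : ℝ → ℝ × ℝ) (hG : IsLebesgueMap2 G)
    (Gl : ℝ → ℝ × ℝ)
    (hagree : ∀ x ∈ cantorTernarySet, Gl x = G x)
    (hinterp : ∀ a b : ℝ, a ∈ cantorTernarySet → b ∈ cantorTernarySet → a < b →
      Set.Ioo a b ∩ cantorTernarySet = ∅ →
      ∀ x ∈ Set.Ioo a b,
        Gl x = ((b - x) / (b - a)) • G a + ((x - a) / (b - a)) • G b) :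
    (ContinuousOn Gl (Set.Icc 0 1) ∧
        Set.SurjOn Gl (Set.Icc (0 : ℝ) 1) (Set.Icc (0 : ℝ) 1 ×ˢ Set.Icc (0 : ℝ) 1)) ∧
      ∃ g : ℝ → ℝ × ℝ, ContinuousOn g (Set.Icc 0 1) ∧
        Set.SurjOn g (Set.Icc (0 : ℝ) 1) (Set.Icc (0 : ℝ) 1 ×ˢ Set.Icc (0 : ℝ) 1) := by
  rw [cantorTernarySet_eq_cantorSet] at hagree hinterp
  have hGl : InterpolatesLinearlyOnGaps cantorSet Gl := fun a ha b hb hab hgap x hx ↦ by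
    rw [hinterp a b ha hb hab hgap x hx, hagree a ha, hagree b hb]
  have hcont : ContinuousOn Gl (Icc 0 1) :=
    hGl.continuousOn_Icc isCompact_cantorSet zero_mem_cantorSet one_mem_cantorSet
      (hG.continuousOn.congr hagree)
  have hsurj : SurjOn Gl (Icc 0 1) (Icc (0 : ℝ) 1 ×ˢ Icc (0 : ℝ) 1) :=
    (hG.surjOn.congr fun x hx ↦ (hagree x hx).symm).mono cantorSet_subset_unitInterval
      subset_rfl
  exact ⟨⟨hcont, hsurj⟩, Gl, hcont, hsurj⟩
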